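/- arXiv:2502.05590 — 3 statements merged into one kernel-verified Lean document; each statement's English description precedes it below -/
import Mathlib

section
/- Let d ≥ 1 be an integer and C ≥ 0. Then there exists M ≥ 1 depending only on d and C (one may take M = e^{(2d−1)C}) such that for every s : ℤ → ℝ with |s(j)| ≤ C for all j ∈ ℤ satisfying the zero d-window condition, and for every k ∈ ℤ and m ∈ ℕ, one has 1/M ≤ ρ(s;k,m) ≤ M. -/
/-- `s : ℤ → ℝ` satisfies the zero `d`-window condition if every `d` consecutive
values sum to zero: `∑_{j=m}^{m+d-1} s j = 0` for all `m : ℤ`. -/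
def ZeroWindow (d : ℕ) (s : ℤ → ℝ) : Prop :=
  ∀ m : ℤ, ∑ j ∈ Finset.range d, s (m + j) = 0

/-- Forward partial sum `S_s(k,l) = ∑_{i=1}^{l} s (k+i)`, with `S_s(k,0) = 0`. -/
def Sfwd (s : ℤ → ℝ) (k : ℤ) (l : ℕ) : ℝ :=
  ∑ i ∈ Finset.range l, s (k + (i + 1))

/-- Backward partial sum `S_s⁻(k,l) = ∑_{i=1}^{l} s (k−i)`, with `S_s⁻(k,0) = 0`. -/
def Sbwd (s : ℤ → ℝ) (k : ℤ) (l : ℕ) : ℝ :=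
  ∑ i ∈ Finset.range l, s (k - (i + 1))

/-- Šarić's quasisymmetry quantity
`ρ(s;k,m) = e^{s k} · (∑_{l=0}^{m} e^{S_s(k,l)}) / (∑_{l=0}^{m} e^{−S_s⁻(k,l)})`. -/
noncomputable def rho (s : ℤ → ℝ) (k : ℤ) (m : ℕ) : ℝ :=
  Real.exp (s k) * (∑ l ∈ Finset.range (m + 1), Real.exp (Sfwd s k l)) /
    (∑ l ∈ Finset.range (m + 1), Real.exp (-(Sbwd s k l)))

lemma Sfwd_window_zero (d : ℕ) (s : ℤ → ℝ) (hw : ZeroWindow d s) (k : ℤ) :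
    Sfwd s k d = 0 := by
  have := hw (k + 1)
  rw [← this, Sfwd]
  exact Finset.sum_congr rfl fun i _ => by congr 1; ring

lemma Sbwd_window_zero (d : ℕ) (s : ℤ → ℝ) (hw : ZeroWindow d s) (k : ℤ) :
    Sbwd s k d = 0 := by
  have := hw (k - d)
  rw [← this, Sbwd, ← Finset.sum_range_reflect (fun j => s (k - d + j)) d]
  refine Finset.sum_congr rfl fun i hi => ?_
  simp only [Finset.mem_range] at hi
  congr 1
  omega

lemma abs_Sfwd_le (d : ℕ) (hd : 1 ≤ d) (C : ℝ) (hC : 0 ≤ C) (s : ℤ → ℝ)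
    (hb : ∀ j, |s j| ≤ C) (hw : ZeroWindow d s) :
    ∀ l k, |Sfwd s k l| ≤ ((d : ℝ) - 1) * C := by
  intro l
  induction l using Nat.strong_induction_on with
  | _ l ih =>
    intro k
    by_cases h : l < d
    · calc |Sfwd s k l| ≤ ∑ i ∈ Finset.range l, |s (k + (i + 1))| :=
            Finset.abs_sum_le_sum_abs _ _
        _ ≤ ∑ _i ∈ Finset.range l, C := Finset.sum_le_sum fun i _ => hb _
        _ = (l : ℝ) * C := by simp [mul_comm]
        _ ≤ ((d : ℝ) - 1) * C := by
            apply mul_le_mul_of_nonneg_right _ hC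
            have : (l : ℝ) + 1 ≤ (d : ℝ) := by exact_mod_cast h
            linarith
    · push_neg at h
      have hdec : Sfwd s k l = Sfwd s k d + Sfwd s (k + d) (l - d) := by
        have hl : l = d + (l - d) := by omega
        conv_lhs => rw [Sfwd, hl, Finset.sum_range_add]
        rw [Sfwd, Sfwd]
        congr 1
        refine Finset.sum_congr rfl fun i _ => ?_
        congr 1
        push_cast
        ring
      rw [hdec, Sfwd_window_zero d s hw, zero_add]
      exact ih (l - d) (by omega) _

lemma abs_Sbwd_le (d : ℕ) (hd : 1 ≤ d) (C : ℝ) (hC : 0 ≤ C) (s : ℤ → ℝ)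
    (hb : ∀ j, |s j| ≤ C) (hw : ZeroWindow d s) :
    ∀ l k, |Sbwd s k l| ≤ ((d : ℝ) - 1) * C := by
  intro l
  induction l using Nat.strong_induction_on with
  | _ l ih =>
    intro k
    by_cases h : l < d
    · calc |Sbwd s k l| ≤ ∑ i ∈ Finset.range l, |s (k - (i + 1))| :=
            Finset.abs_sum_le_sum_abs _ _
        _ ≤ ∑ _i ∈ Finset.range l, C := Finset.sum_le_sum fun i _ => hb _
        _ = (l : ℝ) * C := by simp [mul_comm]
        _ ≤ ((d : ℝ) - 1) * C := by
            apply mul_le_mul_of_nonneg_right _ hC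
            have : (l : ℝ) + 1 ≤ (d : ℝ) := by exact_mod_cast h
            linarith
    · push_neg at h
      have hdec : Sbwd s k l = Sbwd s k d + Sbwd s (k - d) (l - d) := by
        have hl : l = d + (l - d) := by omega
        conv_lhs => rw [Sbwd, hl, Finset.sum_range_add]
        rw [Sbwd, Sbwd]
        congr 1
        refine Finset.sum_congr rfl fun i _ => ?_
        congr 1
        push_cast
        ring
      rw [hdec, Sbwd_window_zero d s hw, zero_add]
      exact ih (l - d) (by omega) _

/-- For `d ≥ 1` and `C ≥ 0` there is `M ≥ 1` depending only on `d` and `C`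
(one may take `M = e^{(2d−1)C}`) such that every bounded-by-`C` shear function
satisfying the zero `d`-window condition has `1/M ≤ ρ(s;k,m) ≤ M` for all `k, m`. -/
theorem rho_uniformly_bounded (d : ℕ) (hd : 1 ≤ d) (C : ℝ) (hC : 0 ≤ C) :
    ∃ M : ℝ, M = Real.exp ((2 * (d : ℝ) - 1) * C) ∧ 1 ≤ M ∧
      ∀ s : ℤ → ℝ, (∀ j : ℤ, |s j| ≤ C) → ZeroWindow d s →
        ∀ (k : ℤ) (m : ℕ), 1 / M ≤ rho s k m ∧ rho s k m ≤ M := by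
  refine ⟨Real.exp ((2 * (d : ℝ) - 1) * C), rfl, ?_, ?_⟩
  · rw [Real.one_le_exp_iff]
    have : (1 : ℝ) ≤ (d : ℝ) := by exact_mod_cast hd
    have h1 : (0 : ℝ) ≤ 2 * (d : ℝ) - 1 := by linarith
    exact mul_nonneg h1 hC
  · intro s hb hw k m
    set D : ℝ := ((d : ℝ) - 1) * C with hD
    have hD0 : 0 ≤ D := by
      have : (1 : ℝ) ≤ (d : ℝ) := by exact_mod_cast hd
      apply mul_nonneg (by linarith) hC
    have hM : (2 * (d : ℝ) - 1) * C = C + 2 * D := by rw [hD]; ring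
    set A : ℝ := ∑ l ∈ Finset.range (m + 1), Real.exp (Sfwd s k l) with hA
    set B : ℝ := ∑ l ∈ Finset.range (m + 1), Real.exp (-(Sbwd s k l)) with hB
    have hcard : (Finset.range (m + 1)).card = m + 1 := Finset.card_range _
    have hAub : A ≤ (m + 1 : ℝ) * Real.exp D := by
      calc A ≤ ∑ _l ∈ Finset.range (m + 1), Real.exp D :=
          Finset.sum_le_sum fun l _ => Real.exp_le_exp.mpr
            ((abs_le.mp (abs_Sfwd_le d hd C hC s hb hw l k)).2)
        _ = (m + 1 : ℝ) * Real.exp D := by simp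
    have hAlb : (m + 1 : ℝ) * Real.exp (-D) ≤ A := by
      calc (m + 1 : ℝ) * Real.exp (-D)
          = ∑ _l ∈ Finset.range (m + 1), Real.exp (-D) := by simp
        _ ≤ A := Finset.sum_le_sum fun l _ => Real.exp_le_exp.mpr
            (by have := (abs_le.mp (abs_Sfwd_le d hd C hC s hb hw l k)).1; linarith)
    have hBub : B ≤ (m + 1 : ℝ) * Real.exp D := by
      calc B ≤ ∑ _l ∈ Finset.range (m + 1), Real.exp D :=
          Finset.sum_le_sum fun l _ => Real.exp_le_exp.mpr
            (by have := (abs_le.mp (abs_Sbwd_le d hd C hC s hb hw l k)).1; linarith)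
        _ = (m + 1 : ℝ) * Real.exp D := by simp
    have hBlb : (m + 1 : ℝ) * Real.exp (-D) ≤ B := by
      calc (m + 1 : ℝ) * Real.exp (-D)
          = ∑ _l ∈ Finset.range (m + 1), Real.exp (-D) := by simp
        _ ≤ B := Finset.sum_le_sum fun l _ => Real.exp_le_exp.mpr
            (by have := (abs_le.mp (abs_Sbwd_le d hd C hC s hb hw l k)).2; linarith)
    have hBpos : 0 < B := by
      have : (0 : ℝ) < (m + 1 : ℝ) * Real.exp (-D) := by positivity
      linarith
    have hsk := abs_le.mp (hb k)
    constructor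
    · have hApos : 0 < A := by
        have : (0 : ℝ) < (m + 1 : ℝ) * Real.exp (-D) := by positivity
        linarith
      rw [rho, div_le_div_iff₀ (Real.exp_pos _) hBpos, one_mul]
      calc B ≤ (m + 1 : ℝ) * Real.exp D := hBub
        _ = Real.exp (-C) * ((m + 1 : ℝ) * Real.exp (-D)) * Real.exp (C + 2 * D) := by
            have hE : Real.exp (-C) * Real.exp (-D) * Real.exp (C + 2 * D) = Real.exp D := by
              rw [← Real.exp_add, ← Real.exp_add]; congr 1; ring
            rw [← hE]; ring
        _ ≤ Real.exp (s k) * A * Real.exp ((2 * (d : ℝ) - 1) * C) := by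
            rw [hM]
            apply mul_le_mul_of_nonneg_right _ (Real.exp_pos _).le
            apply mul_le_mul (Real.exp_le_exp.mpr (by linarith [hsk.1])) hAlb (by positivity) (Real.exp_pos _).le
    · rw [rho, div_le_iff₀ hBpos]
      calc Real.exp (s k) * A ≤ Real.exp C * ((m + 1 : ℝ) * Real.exp D) := by
            apply mul_le_mul (Real.exp_le_exp.mpr hsk.2) hAub (by positivity) (by positivity)
        _ = (m + 1 : ℝ) * Real.exp (C + D) := by rw [Real.exp_add]; ring
        _ ≤ Real.exp ((2 * (d : ℝ) - 1) * C) * B := by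
            calc (m + 1 : ℝ) * Real.exp (C + D)
                = Real.exp (C + 2 * D) * ((m + 1 : ℝ) * Real.exp (-D)) := by
                  have hE : Real.exp (C + 2 * D) * Real.exp (-D) = Real.exp (C + D) := by
                    rw [← Real.exp_add]; congr 1; ring
                  rw [← hE]; ring
              _ ≤ Real.exp ((2 * (d : ℝ) - 1) * C) * B := by
                  rw [hM]; exact mul_le_mul_of_nonneg_left hBlb (Real.exp_pos _).le
end

section
/- Let d ≥ 1 be an integer, C ≥ 0, and let s, t : ℤ → ℝ satisfy |s(j)| ≤ C and |t(j)| ≤ C for all j ∈ ℤ, and assume both s and t satisfy the zero d-window condition. Set δ = sup_{j∈ℤ} |s(j) − t(j)|. Then for every k ∈ ℤ and all natural numbers q, r with r < d, |∑_{l=0}^{qd+r} (e^{S_s(k,l)} − e^{S_t(k,l)})| ≤ (q+1) · d · 2^d · e^{dC} · (e^{δ} − 1); in particular the left-hand side is at most (q+1)·K·δ·e^{δ} for a constant K depending only on d and C. -/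
/-!
The zero-window condition makes `l ↦ S_s(k,l)` periodic of period `d`, so every partial sum
is a sum of fewer than `d` values: `|S_s(k,l)|, |S_t(k,l)| ≤ dC` and `|S_s(k,l) - S_t(k,l)| ≤ dδ`.
Since `exp` is `e^{dC}`-Lipschitz on `(-∞, dC]`, each of the at most `(q+1)d` summands is at most
`e^{dC} dδ`, and `dδ ≤ 2^d (e^δ - 1) ≤ 2^d δ e^δ`.
-/

open Finset

namespace Real

lemma exp_sub_exp_le_exp_mul_sub (a b : ℝ) : exp a - exp b ≤ exp a * (a - b) := by
  have h : exp b = exp a * exp (b - a) := by rw [← exp_add, add_sub_cancel]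
  have h' := add_one_le_exp (b - a)
  rw [h]
  nlinarith [exp_pos a]

lemma abs_exp_sub_exp_le_of_le {a b M : ℝ} (ha : a ≤ M) (hb : b ≤ M) :
    |exp a - exp b| ≤ exp M * |a - b| := by
  have key : ∀ x y : ℝ, x ≤ M → exp x - exp y ≤ exp M * |x - y| := fun x y hx =>
    calc exp x - exp y ≤ exp x * (x - y) := exp_sub_exp_le_exp_mul_sub x y
      _ ≤ exp x * |x - y| := mul_le_mul_of_nonneg_left (le_abs_self _) (exp_pos x).le
      _ ≤ exp M * |x - y| := mul_le_mul_of_nonneg_right (exp_le_exp.2 hx) (abs_nonneg _)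
  exact abs_sub_le_iff.2 ⟨key a b ha, abs_sub_comm a b ▸ key b a hb⟩

end Real

section ZeroWindow

variable {d : ℕ} {s t : ℤ → ℝ}

lemma ZeroWindow.sub (hs : ZeroWindow d s) (ht : ZeroWindow d t) : ZeroWindow d (s - t) := by
  intro m
  simp only [Pi.sub_apply, sum_sub_distrib, hs m, ht m, sub_zero]

lemma Sfwd_sub (k : ℤ) (l : ℕ) : Sfwd (s - t) k l = Sfwd s k l - Sfwd t k l := by
  simp only [Sfwd, Pi.sub_apply, sum_sub_distrib]

lemma ZeroWindow.Sfwd_add_self (hs : ZeroWindow d s) (k : ℤ) (m : ℕ) :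
    Sfwd s k (m + d) = Sfwd s k m := by
  have hwindow : ∑ i ∈ range d, s (k + ((m + i : ℕ) + 1)) = ∑ i ∈ range d, s (k + m + 1 + i) := by
    refine sum_congr rfl fun i _ => congrArg s ?_
    push_cast
    ring
  rw [Sfwd, sum_range_add, hwindow, hs, add_zero, Sfwd]

lemma ZeroWindow.Sfwd_add_mul (hs : ZeroWindow d s) (k : ℤ) (m n : ℕ) :
    Sfwd s k (m + d * n) = Sfwd s k m := by
  induction n with
  | zero => rw [mul_zero, add_zero]
  | succ n ih => rw [mul_add_one, ← add_assoc, hs.Sfwd_add_self, ih]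

lemma ZeroWindow.Sfwd_mod (hs : ZeroWindow d s) (k : ℤ) (l : ℕ) :
    Sfwd s k (l % d) = Sfwd s k l := by
  conv_rhs => rw [← Nat.mod_add_div l d]
  exact (hs.Sfwd_add_mul k _ _).symm

lemma abs_Sfwd_le_s6 {C : ℝ} (hs : ∀ j, |s j| ≤ C) (k : ℤ) (l : ℕ) : |Sfwd s k l| ≤ l * C :=
  calc |Sfwd s k l| ≤ ∑ i ∈ range l, |s (k + (i + 1))| := abs_sum_le_sum_abs _ _
    _ ≤ l * C := by simpa using sum_le_card_nsmul (range l) _ C fun i _ => hs _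

lemma ZeroWindow.abs_Sfwd_le_mul {C : ℝ} (hw : ZeroWindow d s) (hd : 0 < d)
    (hs : ∀ j, |s j| ≤ C) (k : ℤ) (l : ℕ) : |Sfwd s k l| ≤ d * C := by
  have hC : 0 ≤ C := (abs_nonneg _).trans (hs 0)
  rw [← hw.Sfwd_mod]
  refine (abs_Sfwd_le_s6 hs k _).trans (mul_le_mul_of_nonneg_right ?_ hC)
  exact_mod_cast (Nat.mod_lt l hd).le

lemma abs_exp_Sfwd_sub_exp_Sfwd_le {C δ : ℝ} (hd : 0 < d) (hws : ZeroWindow d s)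
    (hwt : ZeroWindow d t) (hs : ∀ j, |s j| ≤ C) (ht : ∀ j, |t j| ≤ C)
    (hδ : ∀ j, |s j - t j| ≤ δ) (k : ℤ) (l : ℕ) :
    |Real.exp (Sfwd s k l) - Real.exp (Sfwd t k l)| ≤ Real.exp (d * C) * (d * δ) := by
  have hSs := hws.abs_Sfwd_le_mul hd hs k l
  have hSt := hwt.abs_Sfwd_le_mul hd ht k l
  have hSst : |Sfwd s k l - Sfwd t k l| ≤ d * δ := by
    rw [← Sfwd_sub]
    exact (hws.sub hwt).abs_Sfwd_le_mul hd hδ k l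
  calc |Real.exp (Sfwd s k l) - Real.exp (Sfwd t k l)|
      ≤ Real.exp (d * C) * |Sfwd s k l - Sfwd t k l| :=
        Real.abs_exp_sub_exp_le_of_le (le_abs_self _ |>.trans hSs) (le_abs_self _ |>.trans hSt)
    _ ≤ Real.exp (d * C) * (d * δ) := mul_le_mul_of_nonneg_left hSst (Real.exp_pos _).le

lemma abs_sum_exp_Sfwd_sub_exp_Sfwd_le {C δ : ℝ} (hd : 0 < d) (hws : ZeroWindow d s)
    (hwt : ZeroWindow d t) (hs : ∀ j, |s j| ≤ C) (ht : ∀ j, |t j| ≤ C)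
    (hδ : ∀ j, |s j - t j| ≤ δ) (k : ℤ) (n : ℕ) :
    |∑ l ∈ range n, (Real.exp (Sfwd s k l) - Real.exp (Sfwd t k l))| ≤
      n * (Real.exp (d * C) * (d * δ)) :=
  (abs_sum_le_sum_abs _ _).trans <| by
    simpa using sum_le_card_nsmul (range n) _ _ fun l _ =>
      abs_exp_Sfwd_sub_exp_Sfwd_le hd hws hwt hs ht hδ k l

end ZeroWindow

theorem exp_sum_diff_numerator_bound_general (d : ℕ) (hd : 1 ≤ d) (C : ℝ)
    (s t : ℤ → ℝ) (hs : ∀ j : ℤ, |s j| ≤ C) (ht : ∀ j : ℤ, |t j| ≤ C)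
    (hws : ZeroWindow d s) (hwt : ZeroWindow d t) :
    (∀ (k : ℤ) (q r : ℕ), r < d →
      |∑ l ∈ Finset.range (q * d + r + 1),
          (Real.exp (Sfwd s k l) - Real.exp (Sfwd t k l))| ≤
        ((q : ℝ) + 1) * d * 2 ^ d * Real.exp ((d : ℝ) * C) *
          (Real.exp (⨆ j : ℤ, |s j - t j|) - 1)) ∧
    ∃ K : ℝ, K = (d : ℝ) * 2 ^ d * Real.exp ((d : ℝ) * C) ∧ 0 < K ∧
      ∀ (k : ℤ) (q r : ℕ), r < d →
        |∑ l ∈ Finset.range (q * d + r + 1),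
            (Real.exp (Sfwd s k l) - Real.exp (Sfwd t k l))| ≤
          ((q : ℝ) + 1) * K * (⨆ j : ℤ, |s j - t j|) *
            Real.exp (⨆ j : ℤ, |s j - t j|) := by
  set δ := ⨆ j : ℤ, |s j - t j|
  have hδ : ∀ j, |s j - t j| ≤ δ := le_ciSup ⟨C + C, by
    rintro _ ⟨j, rfl⟩
    exact (abs_sub _ _).trans (add_le_add (hs j) (ht j))⟩
  have hδ0 : 0 ≤ δ := (abs_nonneg _).trans (hδ 0)
  have hexpδ : Real.exp δ - 1 ≤ Real.exp δ * δ := by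
    simpa using Real.exp_sub_exp_le_exp_mul_sub δ 0
  have hmain : ∀ (k : ℤ) (q r : ℕ), r < d →
      |∑ l ∈ range (q * d + r + 1), (Real.exp (Sfwd s k l) - Real.exp (Sfwd t k l))| ≤
        ((q : ℝ) + 1) * d * 2 ^ d * Real.exp (d * C) * (Real.exp δ - 1) := by
    intro k q r hr
    have hcard : ((q * d + r + 1 : ℕ) : ℝ) ≤ ((q + 1) * d : ℕ) := by
      gcongr
      rw [add_one_mul]
      omega
    have hd2 : (d : ℝ) ≤ 2 ^ d := by exact_mod_cast d.lt_two_pow_self.le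
    calc _ ≤ ((q * d + r + 1 : ℕ) : ℝ) * (Real.exp (d * C) * (d * δ)) :=
          abs_sum_exp_Sfwd_sub_exp_Sfwd_le hd hws hwt hs ht hδ k _
      _ ≤ ((q + 1) * d : ℕ) * (Real.exp (d * C) * (2 ^ d * (Real.exp δ - 1))) := by
          gcongr
          linarith [Real.add_one_le_exp δ]
      _ = _ := by push_cast; ring
  refine ⟨hmain, _, rfl, by positivity, fun k q r hr => (hmain k q r hr).trans ?_⟩
  calc ((q : ℝ) + 1) * d * 2 ^ d * Real.exp (d * C) * (Real.exp δ - 1)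
      ≤ ((q : ℝ) + 1) * d * 2 ^ d * Real.exp (d * C) * (Real.exp δ * δ) := by gcongr
    _ = _ := by ring

/-- If `|s j| ≤ C`, `|t j| ≤ C` and both `s`, `t` satisfy the zero `d`-window
condition, then with `δ = sup_j |s j − t j|`, for every `k : ℤ` and `q r : ℕ`
with `r < d`:
`|∑_{l=0}^{qd+r} (e^{S_s(k,l)} − e^{S_t(k,l)})| ≤ (q+1)·d·2^d·e^{dC}·(e^{δ} − 1)`;
in particular the left-hand side is at most `(q+1)·K·δ·e^{δ}` with the constant
`K = d·2^d·e^{dC}` depending only on `d` and `C`. -/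
theorem exp_sum_diff_numerator_bound (d : ℕ) (hd : 1 ≤ d) (C : ℝ) (hC : 0 ≤ C)
    (s t : ℤ → ℝ) (hs : ∀ j : ℤ, |s j| ≤ C) (ht : ∀ j : ℤ, |t j| ≤ C)
    (hws : ZeroWindow d s) (hwt : ZeroWindow d t) :
    (∀ (k : ℤ) (q r : ℕ), r < d →
      |∑ l ∈ Finset.range (q * d + r + 1),
          (Real.exp (Sfwd s k l) - Real.exp (Sfwd t k l))| ≤
        ((q : ℝ) + 1) * d * 2 ^ d * Real.exp ((d : ℝ) * C) *
          (Real.exp (⨆ j : ℤ, |s j - t j|) - 1)) ∧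
    ∃ K : ℝ, K = (d : ℝ) * 2 ^ d * Real.exp ((d : ℝ) * C) ∧ 0 < K ∧
      ∀ (k : ℤ) (q r : ℕ), r < d →
        |∑ l ∈ Finset.range (q * d + r + 1),
            (Real.exp (Sfwd s k l) - Real.exp (Sfwd t k l))| ≤
          ((q : ℝ) + 1) * K * (⨆ j : ℤ, |s j - t j|) *
            Real.exp (⨆ j : ℤ, |s j - t j|) :=
  exp_sum_diff_numerator_bound_general d hd C s t hs ht hws hwt
end

section
/- Let d ≥ 1 be an integer and C ≥ 0. Then there exist constants δ₀ > 0 and K > 0 depending only on d and C such that the following holds: for all s, t : ℤ → ℝ with |s(j)| ≤ C and |t(j)| ≤ C for all j ∈ ℤ, both satisfying the zero d-window condition, and with δ := sup_{j∈ℤ} |s(j) − t(j)| ≤ δ₀, one has |ρ(s;k,m)/ρ(t;k,m) − 1| ≤ K·δ for every k ∈ ℤ and every m ∈ ℕ. -/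
lemma Sfwd_add_window (d : ℕ) (u : ℤ → ℝ) (hz : ZeroWindow d u) (k : ℤ) (n : ℕ) :
    Sfwd u k (n + d) = Sfwd u k n := by
  unfold Sfwd
  rw [Finset.sum_range_add]
  have h : ∑ i ∈ Finset.range d, u (k + ((n + i : ℕ) + 1)) = 0 := by
    rw [← hz (k + n + 1)]
    refine Finset.sum_congr rfl fun i hi => ?_
    congr 1
    push_cast
    ring
  rw [h, add_zero]

lemma Sbwd_add_window (d : ℕ) (u : ℤ → ℝ) (hz : ZeroWindow d u) (k : ℤ) (n : ℕ) :
    Sbwd u k (n + d) = Sbwd u k n := by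
  unfold Sbwd
  rw [Finset.sum_range_add]
  have h : ∑ i ∈ Finset.range d, u (k - ((n + i : ℕ) + 1)) = 0 := by
    rw [← Finset.sum_range_reflect, ← hz (k - n - d)]
    refine Finset.sum_congr rfl fun j hj => ?_
    have hj' : j < d := Finset.mem_range.mp hj
    congr 1
    omega
  rw [h, add_zero]

lemma Sfwd_bdd (d : ℕ) (hd : 1 ≤ d) (u : ℤ → ℝ) (hz : ZeroWindow d u)
    (δ : ℝ) (hu : ∀ j, |u j| ≤ δ) (k : ℤ) : ∀ l, |Sfwd u k l| ≤ d * δ := by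
  have hδ0 : 0 ≤ δ := le_trans (abs_nonneg _) (hu 0)
  intro l
  induction l using Nat.strong_induction_on with
  | _ l ih =>
    rcases lt_or_ge l d with h | h
    · calc |Sfwd u k l| ≤ ∑ i ∈ Finset.range l, |u (k + (i + 1))| :=
            Finset.abs_sum_le_sum_abs _ _
        _ ≤ ∑ _i ∈ Finset.range l, δ := Finset.sum_le_sum fun i _ => hu _
        _ = (l : ℝ) * δ := by simp [mul_comm]
        _ ≤ (d : ℝ) * δ := by
            apply mul_le_mul_of_nonneg_right _ hδ0
            exact_mod_cast h.le
    · have hl : l = (l - d) + d := by omega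
      rw [hl, Sfwd_add_window d u hz]
      exact ih (l - d) (by omega)

lemma Sbwd_bdd (d : ℕ) (hd : 1 ≤ d) (u : ℤ → ℝ) (hz : ZeroWindow d u)
    (δ : ℝ) (hu : ∀ j, |u j| ≤ δ) (k : ℤ) : ∀ l, |Sbwd u k l| ≤ d * δ := by
  have hδ0 : 0 ≤ δ := le_trans (abs_nonneg _) (hu 0)
  intro l
  induction l using Nat.strong_induction_on with
  | _ l ih =>
    rcases lt_or_ge l d with h | h
    · calc |Sbwd u k l| ≤ ∑ i ∈ Finset.range l, |u (k - (i + 1))| :=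
            Finset.abs_sum_le_sum_abs _ _
        _ ≤ ∑ _i ∈ Finset.range l, δ := Finset.sum_le_sum fun i _ => hu _
        _ = (l : ℝ) * δ := by simp [mul_comm]
        _ ≤ (d : ℝ) * δ := by
            apply mul_le_mul_of_nonneg_right _ hδ0
            exact_mod_cast h.le
    · have hl : l = (l - d) + d := by omega
      rw [hl, Sbwd_add_window d u hz]
      exact ih (l - d) (by omega)

lemma sum_exp_le (m : ℕ) (B : ℝ) (f g : ℕ → ℝ) (h : ∀ l, f l ≤ g l + B) :
    ∑ l ∈ Finset.range (m + 1), Real.exp (f l) ≤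
      Real.exp B * ∑ l ∈ Finset.range (m + 1), Real.exp (g l) := by
  rw [Finset.mul_sum]
  refine Finset.sum_le_sum fun l _ => ?_
  rw [← Real.exp_add]
  exact Real.exp_le_exp.mpr (by linarith [h l])

lemma ratio_abs_bound (A δ r : ℝ) (hA0 : 0 < A) (hδ0 : 0 ≤ δ) (hδ1 : δ ≤ 1)
    (hlo : Real.exp (-(A * δ)) ≤ r) (hup : r ≤ Real.exp (A * δ)) :
    |r - 1| ≤ A * Real.exp A * δ := by
  have hE : 0 < Real.exp (A * δ) := Real.exp_pos _
  have hmul : Real.exp (-(A * δ)) * Real.exp (A * δ) = 1 := by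
    rw [← Real.exp_add, neg_add_cancel, Real.exp_zero]
  have h1 : -(A * δ) + 1 ≤ Real.exp (-(A * δ)) := Real.add_one_le_exp _
  have h3 : Real.exp (A * δ) ≤ Real.exp A := by
    apply Real.exp_le_exp.mpr; nlinarith
  have h4 : (1 : ℝ) ≤ Real.exp A := Real.one_le_exp hA0.le
  have hAδ : 0 ≤ A * δ := by positivity
  rw [abs_le]
  constructor
  · nlinarith [mul_nonneg hAδ (sub_nonneg.mpr h4)]
  · nlinarith [mul_le_mul_of_nonneg_right h1 hE.le,
      mul_le_mul_of_nonneg_left h3 hAδ]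

/-- For `d ≥ 1` and `C ≥ 0` there are constants `δ₀ > 0` and `K > 0` depending
only on `d` and `C` such that for all `s, t` bounded by `C` and satisfying the
zero `d`-window condition with `δ = sup_j |s j − t j| ≤ δ₀`, one has
`|ρ(s;k,m)/ρ(t;k,m) − 1| ≤ K·δ` for every `k : ℤ` and `m : ℕ`. -/
theorem rho_ratio_close_to_one (d : ℕ) (hd : 1 ≤ d) (C : ℝ) (hC : 0 ≤ C) :
    ∃ δ₀ : ℝ, 0 < δ₀ ∧ ∃ K : ℝ, 0 < K ∧
      ∀ s t : ℤ → ℝ, (∀ j : ℤ, |s j| ≤ C) → (∀ j : ℤ, |t j| ≤ C) →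
        ZeroWindow d s → ZeroWindow d t →
        (⨆ j : ℤ, |s j - t j|) ≤ δ₀ →
        ∀ (k : ℤ) (m : ℕ),
          |rho s k m / rho t k m - 1| ≤ K * (⨆ j : ℤ, |s j - t j|) := by
  set A : ℝ := 2 * d + 1 with hA
  have hA0 : 0 < A := by positivity
  refine ⟨1, one_pos, A * Real.exp A, by positivity, ?_⟩
  intro s t hs ht hzs hzt hδ₀ k m
  set δ : ℝ := ⨆ j : ℤ, |s j - t j| with hδdef
  have hbdd : BddAbove (Set.range fun j : ℤ => |s j - t j|) := by
    refine ⟨2 * C, ?_⟩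
    rintro x ⟨j, rfl⟩
    calc |s j - t j| ≤ |s j| + |t j| := abs_sub _ _
      _ ≤ C + C := add_le_add (hs j) (ht j)
      _ = 2 * C := by ring
  have hpt : ∀ j, |s j - t j| ≤ δ := fun j => le_ciSup hbdd j
  have hδ0 : 0 ≤ δ := le_trans (abs_nonneg _) (hpt 0)
  set u : ℤ → ℝ := fun j => s j - t j with hu
  have hzu : ZeroWindow d u := fun n => by
    simp only [hu, Finset.sum_sub_distrib, hzs n, hzt n, sub_zero]
  have hSf := Sfwd_bdd d hd u hzu δ hpt k
  have hSb := Sbwd_bdd d hd u hzu δ hpt k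
  have hSfeq : ∀ l, Sfwd u k l = Sfwd s k l - Sfwd t k l := fun l => by
    simp [Sfwd, hu, Finset.sum_sub_distrib]
  have hSbeq : ∀ l, Sbwd u k l = Sbwd s k l - Sbwd t k l := fun l => by
    simp [Sbwd, hu, Finset.sum_sub_distrib]
  set Ps := Real.exp (s k)
  set Pt := Real.exp (t k)
  set Ns := ∑ l ∈ Finset.range (m + 1), Real.exp (Sfwd s k l) with hNs
  set Nt := ∑ l ∈ Finset.range (m + 1), Real.exp (Sfwd t k l) with hNt
  set Ds := ∑ l ∈ Finset.range (m + 1), Real.exp (-(Sbwd s k l)) with hDs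
  set Dt := ∑ l ∈ Finset.range (m + 1), Real.exp (-(Sbwd t k l)) with hDt
  have hPs : 0 < Ps := Real.exp_pos _
  have hPt : 0 < Pt := Real.exp_pos _
  have hNs0 : 0 < Ns := Finset.sum_pos (fun l _ => Real.exp_pos _) ⟨0, by simp⟩
  have hNt0 : 0 < Nt := Finset.sum_pos (fun l _ => Real.exp_pos _) ⟨0, by simp⟩
  have hDs0 : 0 < Ds := Finset.sum_pos (fun l _ => Real.exp_pos _) ⟨0, by simp⟩
  have hDt0 : 0 < Dt := Finset.sum_pos (fun l _ => Real.exp_pos _) ⟨0, by simp⟩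
  have hNst : Ns ≤ Real.exp (d * δ) * Nt := by
    refine sum_exp_le m _ _ _ fun l => ?_
    have h1 := (abs_le.mp (hSf l)).2
    rw [hSfeq l] at h1; linarith
  have hNts : Nt ≤ Real.exp (d * δ) * Ns := by
    refine sum_exp_le m _ _ _ fun l => ?_
    have h1 := (abs_le.mp (hSf l)).1
    rw [hSfeq l] at h1; linarith
  have hDst : Ds ≤ Real.exp (d * δ) * Dt := by
    refine sum_exp_le m _ _ _ fun l => ?_
    have h1 := (abs_le.mp (hSb l)).1
    rw [hSbeq l] at h1; linarith
  have hDts : Dt ≤ Real.exp (d * δ) * Ds := by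
    refine sum_exp_le m _ _ _ fun l => ?_
    have h1 := (abs_le.mp (hSb l)).2
    rw [hSbeq l] at h1; linarith
  have hPst : Ps ≤ Real.exp δ * Pt := by
    rw [← Real.exp_add]
    exact Real.exp_le_exp.mpr (by linarith [(abs_le.mp (hpt k)).2])
  have hPts : Pt ≤ Real.exp δ * Ps := by
    rw [← Real.exp_add]
    exact Real.exp_le_exp.mpr (by linarith [(abs_le.mp (hpt k)).1])
  have hexp_eq : Real.exp δ * (Real.exp (d * δ) * Real.exp (d * δ)) =
      Real.exp (A * δ) := by
    rw [← Real.exp_add, ← Real.exp_add]; congr 1; rw [hA]; ring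
  have key1 : Ps * Ns * Dt ≤ Real.exp (A * δ) * (Pt * Nt * Ds) := by
    calc Ps * Ns * Dt
        ≤ (Real.exp δ * Pt) * (Real.exp (d * δ) * Nt) * (Real.exp (d * δ) * Ds) := by
          gcongr <;> positivity
      _ = Real.exp δ * (Real.exp (d * δ) * Real.exp (d * δ)) * (Pt * Nt * Ds) := by ring
      _ = Real.exp (A * δ) * (Pt * Nt * Ds) := by rw [hexp_eq]
  have key2 : Pt * Nt * Ds ≤ Real.exp (A * δ) * (Ps * Ns * Dt) := by
    calc Pt * Nt * Ds
        ≤ (Real.exp δ * Ps) * (Real.exp (d * δ) * Ns) * (Real.exp (d * δ) * Dt) := by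
          gcongr <;> positivity
      _ = Real.exp δ * (Real.exp (d * δ) * Real.exp (d * δ)) * (Ps * Ns * Dt) := by ring
      _ = Real.exp (A * δ) * (Ps * Ns * Dt) := by rw [hexp_eq]
  have hr_eq : rho s k m / rho t k m = (Ps * Ns * Dt) / (Pt * Nt * Ds) := by
    rw [rho, rho, ← hNs, ← hNt, ← hDs, ← hDt]
    field_simp
    ring
  have hden : 0 < Pt * Nt * Ds := by positivity
  have hnum : 0 < Ps * Ns * Dt := by positivity
  have hrup : rho s k m / rho t k m ≤ Real.exp (A * δ) := by
    rw [hr_eq, div_le_iff₀ hden]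
    exact key1
  have hrlo : Real.exp (-(A * δ)) ≤ rho s k m / rho t k m := by
    rw [hr_eq, le_div_iff₀ hden]
    have h1 : Real.exp (-(A * δ)) * (Pt * Nt * Ds) ≤
        Real.exp (-(A * δ)) * (Real.exp (A * δ) * (Ps * Ns * Dt)) :=
      mul_le_mul_of_nonneg_left key2 (Real.exp_nonneg _)
    have h2 : Real.exp (-(A * δ)) * (Real.exp (A * δ) * (Ps * Ns * Dt)) = Ps * Ns * Dt := by
      rw [← mul_assoc, ← Real.exp_add, neg_add_cancel, Real.exp_zero, one_mul]
    linarith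
  exact ratio_abs_bound A δ _ hA0 hδ0 hδ₀ hrlo hrup
end
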